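/- Let D be a commutative integral domain and s ∈ D^n. For every 1 ≤ j ≤ n, either LC_j = LC_{j−1} or LC_j = j − LC_{j−1}, where LC_0 = 0. Equivalently, LC_j = max(LC_{j−1}, j − LC_{j−1}) whenever LC_j ≠ LC_{j−1}. -/

import Mathlib

open Polynomial Finset

/-- `f` is a (nonzero) annihilator of the finite sequence `s_1,…,s_n`:
`f_0 s_{j-d} + … + f_d s_j = 0` for all `d+1 ≤ j ≤ n`, where `d = deg f`. -/
def Annih (D : Type*) [CommRing D] (s : ℕ → D) (n : ℕ) (f : Polynomial D) : Prop :=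
  f ≠ 0 ∧ ∀ j : ℕ, f.natDegree + 1 ≤ j → j ≤ n →
    ∑ k ∈ Finset.range (f.natDegree + 1), f.coeff k * s (j - f.natDegree + k) = 0

/-- The linear complexity of `s_1,…,s_n`: minimal degree of a nonzero annihilator. -/
noncomputable def LC (D : Type*) [CommRing D] (s : ℕ → D) (n : ℕ) : ℕ :=
  sInf {d : ℕ | ∃ f : Polynomial D, Annih D s n f ∧ f.natDegree = d}

/-- The discrepancy `Δ_n(f) = Σ_{k=0}^{d} f_k s_{n-d+k}`. -/
def disc (D : Type*) [CommRing D] (s : ℕ → D) (n : ℕ) (f : Polynomial D) : D :=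
  ∑ k ∈ Finset.range (f.natDegree + 1), f.coeff k * s (n - f.natDegree + k)

/-!
Suppose the complexity jumps at `j + 1`, and let `f` be a minimal annihilator of `s_1,…,s_j`,
`L = deg f`; its discrepancy `Δ` at `j + 1` is nonzero. Massey's lemma gives
`LC_{j+1} ≥ j + 1 - L`: if `g` annihilated `s_1,…,s_{j+1}` with `deg f + deg g ≤ j`, summing
`g_k f_l s_{j+1-deg f-deg g+k+l}` first along `f` and then along `g` would give `f_L Δ = 0`.
Conversely, if `g` annihilates `s_1,…,s_m` but fails at `m + 1` with discrepancy `Δ'`, and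
`deg g + L = m + 1`, then the Berlekamp–Massey update `Δ' X^α f - Δ X^β g` annihilates
`s_1,…,s_{j+1}` and has degree `max L (j + 1 - L)`. As `LC` is monotone, `LC_{j+1} = j + 1 - L`.
After the jump `f` plays the role of `g`, so such a `g` exists at every step by induction.
-/

section Basic

variable {D : Type*} [CommRing D] (s : ℕ → D)

theorem Annih.mono {m n : ℕ} {f : D[X]} (hf : Annih D s n f) (hmn : m ≤ n) : Annih D s m f :=
  ⟨hf.1, fun j h1 h2 => hf.2 j h1 (h2.trans hmn)⟩

theorem Annih.succ {n : ℕ} {f : D[X]} (hf : Annih D s n f) (hΔ : disc D s (n + 1) f = 0) :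
    Annih D s (n + 1) f := by
  refine ⟨hf.1, fun j h1 h2 => ?_⟩
  rcases h2.eq_or_lt with rfl | hlt
  · exact hΔ
  · exact hf.2 j h1 (Nat.le_of_lt_succ hlt)

theorem annih_X_pow [Nontrivial D] (n : ℕ) : Annih D s n (X ^ n) :=
  ⟨(monic_X_pow n).ne_zero, fun j h1 h2 => by rw [natDegree_X_pow] at h1; omega⟩

theorem LC_le_natDegree {n : ℕ} {f : D[X]} (hf : Annih D s n f) : LC D s n ≤ f.natDegree :=
  Nat.sInf_le ⟨f, hf, rfl⟩

theorem exists_annih_natDegree_eq_LC [Nontrivial D] (n : ℕ) :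
    ∃ f : D[X], Annih D s n f ∧ f.natDegree = LC D s n :=
  Nat.sInf_mem (⟨n, X ^ n, annih_X_pow s n, natDegree_X_pow n⟩ :
    {d | ∃ f : D[X], Annih D s n f ∧ f.natDegree = d}.Nonempty)

theorem LC_le_self [Nontrivial D] (n : ℕ) : LC D s n ≤ n :=
  (LC_le_natDegree s (annih_X_pow s n)).trans_eq (natDegree_X_pow n)

theorem LC_mono [Nontrivial D] {m n : ℕ} (hmn : m ≤ n) : LC D s m ≤ LC D s n := by
  obtain ⟨f, hf, hfL⟩ := exists_annih_natDegree_eq_LC s n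
  exact hfL ▸ LC_le_natDegree s (hf.mono s hmn)

theorem disc_succ_ne_zero_of_LC_succ_ne [Nontrivial D] {j : ℕ} {f : D[X]} (hf : Annih D s j f)
    (hfL : f.natDegree = LC D s j) (hne : LC D s (j + 1) ≠ LC D s j) :
    disc D s (j + 1) f ≠ 0 := fun hΔ =>
  hne <| le_antisymm (hfL ▸ LC_le_natDegree s (hf.succ s hΔ)) (LC_mono s (Nat.le_add_right j 1))

theorem LC_zero [Nontrivial D] : LC D s 0 = 0 :=
  Nat.sInf_eq_zero.mpr <| Or.inl ⟨1, ⟨one_ne_zero, fun j h1 h2 => by omega⟩, natDegree_one⟩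

end Basic

section PaddedDisc

variable {D : Type*} [CommRing D] (s : ℕ → D)

def paddedDisc (d i : ℕ) (p : D[X]) : D :=
  ∑ k ∈ range (d + 1), p.coeff k * s (i - d + k)

theorem paddedDisc_sub (d i : ℕ) (p q : D[X]) :
    paddedDisc s d i (p - q) = paddedDisc s d i p - paddedDisc s d i q := by
  simp only [paddedDisc, coeff_sub, sub_mul, sum_sub_distrib]

theorem paddedDisc_C_mul (d i : ℕ) (c : D) (p : D[X]) :
    paddedDisc s d i (C c * p) = c * paddedDisc s d i p := by
  simp only [paddedDisc, coeff_C_mul, mul_assoc, mul_sum]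

theorem paddedDisc_mul_X_pow {d i : ℕ} (p : D[X]) (a : ℕ) (hi : d + a ≤ i) :
    paddedDisc s (d + a) i (p * X ^ a) = paddedDisc s d i p := by
  rw [paddedDisc, show d + a + 1 = a + (d + 1) by omega, sum_range_add]
  have hlow : ∀ k ∈ range a, (p * X ^ a).coeff k * s (i - (d + a) + k) = 0 := fun k hk => by
    rw [coeff_mul_X_pow', if_neg (by simpa using hk), zero_mul]
  rw [sum_eq_zero hlow, zero_add]
  refine sum_congr rfl fun k _ => ?_
  rw [coeff_mul_X_pow', if_pos (Nat.le_add_right a k), Nat.add_sub_cancel_left,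
    show i - (d + a) + (a + k) = i - d + k by omega]

theorem paddedDisc_eq_disc {d i : ℕ} {p : D[X]} (hp : p.natDegree ≤ d) (hi : d ≤ i) :
    paddedDisc s d i p = disc D s (i - (d - p.natDegree)) p := by
  obtain ⟨a, rfl⟩ := Nat.exists_eq_add_of_le hp
  rw [paddedDisc, add_right_comm, sum_range_add, disc, Nat.add_sub_cancel_left]
  have hhigh : ∀ k ∈ range a,
      p.coeff (p.natDegree + 1 + k) * s (i - (p.natDegree + a) + (p.natDegree + 1 + k)) = 0 :=
    fun k _ => by rw [coeff_eq_zero_of_natDegree_lt (by omega), zero_mul]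
  rw [sum_eq_zero hhigh, add_zero]
  exact sum_congr rfl fun k _ => by congr 2; omega

end PaddedDisc

section Complexity

variable {D : Type*} [CommRing D] [IsDomain D] (s : ℕ → D)

/-- Massey's lemma. -/
theorem Annih.disc_succ_eq_zero {f g : D[X]} {j : ℕ}
    (hg : Annih D s j g) (hf : Annih D s (j + 1) f) (hdeg : f.natDegree + g.natDegree ≤ j) :
    disc D s (j + 1) g = 0 := by
  set d := f.natDegree
  set e := g.natDegree
  let t : ℕ → ℕ → D := fun k l => g.coeff k * f.coeff l * s (j + 1 - (d + e) + (k + l))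
  have hrows : ∀ k ∈ range (e + 1), ∑ l ∈ range (d + 1), t k l = 0 := fun k hk => by
    rw [mem_range] at hk
    have hfk : ∑ l ∈ range (d + 1), f.coeff l * s (j + 1 - e + k - d + l) = 0 :=
      hf.2 (j + 1 - e + k) (by omega) (by omega)
    simp only [t, mul_assoc, ← mul_sum]
    rw [sum_congr rfl fun l _ => by rw [show j + 1 - (d + e) + (k + l) =
      j + 1 - e + k - d + l by omega], hfk, mul_zero]
  have hcols : ∀ l ∈ range d, ∑ k ∈ range (e + 1), t k l = 0 := fun l hl => by
    rw [mem_range] at hl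
    have hgl : ∑ k ∈ range (e + 1), g.coeff k * s (j + 1 - d + l - e + k) = 0 :=
      hg.2 (j + 1 - d + l) (by omega) (by omega)
    rw [← mul_zero (f.coeff l), ← hgl, mul_sum]
    exact sum_congr rfl fun k _ => by
      simp only [t, show j + 1 - (d + e) + (k + l) = j + 1 - d + l - e + k by omega]; ring
  have hlast : ∑ k ∈ range (e + 1), t k d = f.leadingCoeff * disc D s (j + 1) g := by
    change _ = f.coeff d * ∑ k ∈ range (e + 1), g.coeff k * s (j + 1 - e + k)
    rw [mul_sum]
    exact sum_congr rfl fun k _ => by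
      simp only [t, show j + 1 - (d + e) + (k + d) = j + 1 - e + k by omega]; ring
  have hzero : f.leadingCoeff * disc D s (j + 1) g = 0 := by
    calc f.leadingCoeff * disc D s (j + 1) g
        = ∑ l ∈ range (d + 1), ∑ k ∈ range (e + 1), t k l := by
          rw [sum_range_succ, sum_eq_zero hcols, zero_add, hlast]
      _ = ∑ k ∈ range (e + 1), ∑ l ∈ range (d + 1), t k l := sum_comm
      _ = 0 := sum_eq_zero hrows
  exact (mul_eq_zero.mp hzero).resolve_left (leadingCoeff_ne_zero.mpr hf.1)

theorem exists_annih_succ_natDegree_eq_max {f g : D[X]} {j m : ℕ}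
    (hf : Annih D s j f) (hg : Annih D s m g) (hmj : m < j)
    (hdeg : g.natDegree + f.natDegree = m + 1) (hgΔ : disc D s (m + 1) g ≠ 0) :
    ∃ h : D[X], Annih D s (j + 1) h ∧
      h.natDegree = max f.natDegree (j + 1 - f.natDegree) := by
  set d := f.natDegree
  set N := max d (j + 1 - d)
  set Δ := disc D s (j + 1) f
  set Δ' := disc D s (m + 1) g
  have hdN : d ≤ N := le_max_left _ _
  have hjdN : j + 1 - d ≤ N := le_max_right _ _
  set h := C Δ' * (f * X ^ (N - d)) - C Δ * (g * X ^ (N - (j + 1 - d)))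
  have hcoeff : h.coeff N = Δ' * f.leadingCoeff := by
    have hgN : (g * X ^ (N - (j + 1 - d))).coeff N = 0 :=
      coeff_eq_zero_of_natDegree_lt <| by rw [natDegree_mul_X_pow _ hg.1]; omega
    simp only [h, coeff_sub, coeff_C_mul, hgN, coeff_mul_X_pow', if_pos (Nat.sub_le N d),
      Nat.sub_sub_self hdN, mul_zero, sub_zero]
    rfl
  have hcoeff_ne : h.coeff N ≠ 0 :=
    hcoeff ▸ mul_ne_zero hgΔ (leadingCoeff_ne_zero.mpr hf.1)
  have hdeg_h : h.natDegree = N := by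
    refine natDegree_eq_of_le_of_coeff_ne_zero ((natDegree_sub_le _ _).trans ?_) hcoeff_ne
    refine max_le ((natDegree_C_mul_le _ _).trans ?_) ((natDegree_C_mul_le _ _).trans ?_)
    · rw [natDegree_mul_X_pow _ hf.1]; omega
    · rw [natDegree_mul_X_pow _ hg.1]; omega
  refine ⟨h, ⟨fun h0 => hcoeff_ne (by rw [h0, coeff_zero]), fun i hi1 hi2 => ?_⟩, hdeg_h⟩
  rw [hdeg_h] at hi1
  have hfi : paddedDisc s N i (f * X ^ (N - d)) = disc D s i f := by
    have := paddedDisc_mul_X_pow s f (N - d) (d := d) (i := i) (by omega)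
    rwa [Nat.add_sub_cancel' hdN] at this
  have hgi : paddedDisc s N i (g * X ^ (N - (j + 1 - d))) = disc D s (i - (j - m)) g := by
    have := paddedDisc_mul_X_pow s g (N - (j + 1 - d)) (d := j + 1 - d) (i := i) (by omega)
    rw [Nat.add_sub_cancel' hjdN] at this
    rw [this, paddedDisc_eq_disc s (by omega) (by omega),
      show j + 1 - d - g.natDegree = j - m by omega]
  change paddedDisc s h.natDegree i h = 0
  rw [hdeg_h, paddedDisc_sub, paddedDisc_C_mul, paddedDisc_C_mul, hfi, hgi]
  rcases hi2.eq_or_lt with rfl | hlt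
  · rw [show j + 1 - (j - m) = m + 1 by omega]; ring
  · rw [show disc D s i f = 0 from hf.2 i (by omega) (by omega),
      show disc D s (i - (j - m)) g = 0 from hg.2 _ (by omega) (by omega)]
    ring

/-- The Berlekamp–Massey invariant, witnessed by the minimal annihilator from before the last
jump of the complexity. -/
def HasFailedAnnih (j : ℕ) : Prop :=
  ∃ m < j, ∃ g : D[X], Annih D s m g ∧ disc D s (m + 1) g ≠ 0 ∧
    g.natDegree + LC D s j = m + 1

theorem LC_succ_eq_of_ne {j : ℕ} (hinv : LC D s j = 0 ∨ HasFailedAnnih s j)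
    (hne : LC D s (j + 1) ≠ LC D s j) : LC D s (j + 1) = j + 1 - LC D s j := by
  have hlt : LC D s j < LC D s (j + 1) := (LC_mono s (Nat.le_add_right j 1)).lt_of_ne hne.symm
  obtain ⟨f, hf, hfL⟩ := exists_annih_natDegree_eq_LC s j
  have hΔ := disc_succ_ne_zero_of_LC_succ_ne s hf hfL hne
  have hlower : j + 1 - LC D s j ≤ LC D s (j + 1) := by
    by_contra! hsmall
    obtain ⟨f', hf', hf'L⟩ := exists_annih_natDegree_eq_LC s (j + 1)
    exact hΔ (hf.disc_succ_eq_zero s hf' (by omega))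
  have hupper : LC D s (j + 1) ≤ j + 1 - LC D s j := by
    rcases hinv with h0 | ⟨m, hmj, g, hg, hgΔ, hgdeg⟩
    · exact h0 ▸ LC_le_self s (j + 1)
    · obtain ⟨h, hh, hhdeg⟩ :=
        exists_annih_succ_natDegree_eq_max s hf hg hmj (by omega) hgΔ
      have := LC_le_natDegree s hh
      rw [hhdeg, hfL] at this
      omega
  omega

theorem LC_eq_zero_or_hasFailedAnnih (j : ℕ) : LC D s j = 0 ∨ HasFailedAnnih s j := by
  induction j with
  | zero => exact Or.inl (LC_zero s)
  | succ j ih =>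
    by_cases hC : LC D s (j + 1) = LC D s j
    · rcases ih with h0 | ⟨m, hmj, g, hg, hgΔ, hgdeg⟩
      · exact Or.inl (hC.trans h0)
      · exact Or.inr ⟨m, hmj.trans (Nat.lt_add_one j), g, hg, hgΔ, hC ▸ hgdeg⟩
    · -- the minimal annihilator of `s_1,…,s_j` is the new failed one
      obtain ⟨f, hf, hfL⟩ := exists_annih_natDegree_eq_LC s j
      have hjump := LC_succ_eq_of_ne s ih hC
      have hLj := LC_le_self s j
      exact Or.inr ⟨j, Nat.lt_add_one j, f, hf, disc_succ_ne_zero_of_LC_succ_ne s hf hfL hC,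
        by omega⟩

end Complexity

theorem LC_step_general (D : Type*) [CommRing D] [IsDomain D]
    (s : ℕ → D) (j : ℕ) :
    (LC D s j = LC D s (j - 1) ∨ LC D s j = j - LC D s (j - 1)) ∧
    (LC D s j ≠ LC D s (j - 1) →
      LC D s j = max (LC D s (j - 1)) (j - LC D s (j - 1))) := by
  rcases j with _ | j
  · simp
  simp only [Nat.add_sub_cancel]
  by_cases hC : LC D s (j + 1) = LC D s j
  · exact ⟨Or.inl hC, fun hne => absurd hC hne⟩
  have hjump := LC_succ_eq_of_ne s (LC_eq_zero_or_hasFailedAnnih s j) hC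
  have hmono := LC_mono s (Nat.le_add_right j 1)
  exact ⟨Or.inr hjump, fun _ => by omega⟩

theorem LC_step (D : Type*) [CommRing D] [IsDomain D]
    (n : ℕ) (s : ℕ → D) (j : ℕ) (hj1 : 1 ≤ j) (hjn : j ≤ n) :
    (LC D s j = LC D s (j - 1) ∨ LC D s j = j - LC D s (j - 1)) ∧
    (LC D s j ≠ LC D s (j - 1) →
      LC D s j = max (LC D s (j - 1)) (j - LC D s (j - 1))) :=
  LC_step_general D s j
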